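/- Let q ≥ 3 and let z ∈ 𝕋ⁿ be such that H_{k−1}(z) conj(H_{i+k−1}(z)) ≠ 0 for all k = 1,…,q−1 and i = 1,…,q−k. If a diagonal matrix diag(b₀,…,b_q) satisfies Φ_H(z) · diag(b₀,…,b_q) · Φ_H*(z) = I, then b₀ = 2 − H*(z)H(z) and b₁ = ⋯ = b_q = 1. -/
import Mathlib


open Matrix Complex

/-- The LP² matrix `Φ_H = [H, I − H H*]` built from the vector of values
`h = H(z)` at a point `z ∈ 𝕋ⁿ` (on the torus `H*(z)` has entries `conj`). -/
noncomputable def PhiV {q : ℕ} (h : Fin q → ℂ) : Matrix (Fin q) (Fin (q + 1)) ℂ :=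
  Matrix.of fun i j =>
    if hj : j = 0 then h i
    else (if i = j.pred hj then (1 : ℂ) else 0) - h i * (starRingEnd ℂ) (h (j.pred hj))

lemma lp2_sum_expand {q : ℕ} (b' c g : Fin q → ℂ) (u v : ℂ) (i k : Fin q) :
    ∑ x, ((if i = x then (1:ℂ) else 0) - u * c x) * b' x * ((if k = x then 1 else 0) - v * g x)
    = (if i = k then b' i else 0) - b' i * (v * g i) - b' k * (u * c k)
      + u * v * ∑ x, b' x * (c x * g x) := by
  have e : ∀ x ∈ Finset.univ,
      ((if i = x then (1:ℂ) else 0) - u * c x) * b' x * ((if k = x then 1 else 0) - v * g x)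
      = ((if i = x then (if k = x then b' x else 0) else 0)
        - (if i = x then b' x * (v * g x) else 0)
        - (if k = x then b' x * (u * c x) else 0))
        + u * v * (b' x * (c x * g x)) := by
    intro x _; split_ifs <;> ring
  rw [Finset.sum_congr rfl e, Finset.sum_add_distrib, Finset.sum_sub_distrib,
    Finset.sum_sub_distrib, Finset.sum_ite_eq, Finset.sum_ite_eq, Finset.sum_ite_eq,
    ← Finset.mul_sum]
  simp [eq_comm]

/-- for `q ≥ 3`, at a point `z` with
`H_{k−1}(z) conj(H_{i+k−1}(z)) ≠ 0` for all `k = 1, …, q−1`, `i = 1, …, q−k`,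
if `Φ_H(z) diag(b₀, …, b_q) Φ_H*(z) = I` then `b₀ = 2 − H*(z)H(z)` and
`b₁ = ⋯ = b_q = 1`. -/
theorem lp2_scaling_unique (q : ℕ) (hq : 3 ≤ q) (h : Fin q → ℂ)
    (hnz : ∀ k i : ℕ, 1 ≤ k → k ≤ q - 1 → 1 ≤ i → i ≤ q - k →
      ∀ (hk : k - 1 < q) (hik : i + k - 1 < q),
        h ⟨k - 1, hk⟩ * (starRingEnd ℂ) (h ⟨i + k - 1, hik⟩) ≠ 0)
    (b : Fin (q + 1) → ℂ)
    (hb : PhiV h * Matrix.diagonal b * (PhiV h)ᴴ = 1) :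
    b 0 = ((2 : ℝ) - ∑ j, Complex.normSq (h j) : ℝ) ∧
    ∀ j : Fin (q + 1), (j : ℕ) ≠ 0 → b j = 1 := by
  classical
  set S : ℂ := ∑ x : Fin q, b x.succ * ((starRingEnd ℂ) (h x) * h x) with hS
  -- all components of h are nonzero
  have hne : ∀ j : Fin q, h j ≠ 0 := by
    intro j
    by_cases hj : (j : ℕ) = 0
    · have hprod := hnz 1 1 le_rfl (by omega) le_rfl (by omega) (by omega) (by omega)
      intro h0
      apply hprod
      have e : (⟨1 - 1, by omega⟩ : Fin q) = j := Fin.ext (by simp [hj])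
      rw [e, h0, zero_mul]
    · have hj1 : 1 ≤ (j : ℕ) := Nat.one_le_iff_ne_zero.mpr hj
      have hprod := hnz 1 (j : ℕ) le_rfl (by omega) hj1 (by omega) (by omega) (by omega)
      intro h0
      apply hprod
      have e : (⟨(j : ℕ) + 1 - 1, by omega⟩ : Fin q) = j := Fin.ext (by simp)
      rw [e, h0, map_zero, mul_zero]
  -- the entry equations
  have key : ∀ i k : Fin q,
      h i * b 0 * (starRingEnd ℂ) (h k)
        + ((if i = k then b i.succ else 0)
          - b i.succ * ((starRingEnd ℂ) (h k) * h i)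
          - b k.succ * (h i * (starRingEnd ℂ) (h k))
          + h i * (starRingEnd ℂ) (h k) * S)
      = (if i = k then 1 else 0) := by
    intro i k
    have h1 : (PhiV h * Matrix.diagonal b * (PhiV h)ᴴ) i k
        = (1 : Matrix (Fin q) (Fin q) ℂ) i k := by rw [hb]
    rw [Matrix.mul_apply] at h1
    simp only [Matrix.mul_diagonal, Matrix.conjTranspose_apply, Matrix.one_apply] at h1
    rw [Fin.sum_univ_succ] at h1
    simp only [PhiV, Matrix.of_apply, dif_pos rfl, dif_neg (Fin.succ_ne_zero _), Fin.pred_succ,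
      Complex.star_def, dite_true, map_sub, _root_.map_mul, apply_ite (starRingEnd ℂ),
      _root_.map_one, map_zero, Complex.conj_conj] at h1
    rw [lp2_sum_expand (fun x => b x.succ) (fun x => (starRingEnd ℂ) (h x)) h
      (h i) ((starRingEnd ℂ) (h k)) i k] at h1
    exact h1
  -- off-diagonal equations
  have hoff : ∀ i k : Fin q, i ≠ k → b 0 + S = b i.succ + b k.succ := by
    intro i k hik
    have hk := key i k
    rw [if_neg hik, if_neg hik] at hk
    have h2 : h i * (starRingEnd ℂ) (h k) * (b 0 + S - b i.succ - b k.succ) = 0 := by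
      linear_combination hk
    have h3 : h i * (starRingEnd ℂ) (h k) ≠ 0 :=
      mul_ne_zero (hne i) (by simpa using (hne k))
    have h4 := (mul_eq_zero.mp h2).resolve_left h3
    linear_combination h4
  -- existence of a third index
  have hex : ∀ m m' : Fin q, ∃ l : Fin q, l ≠ m ∧ l ≠ m' := by
    intro m m'
    by_contra hc
    push_neg at hc
    have hsub : (Finset.univ : Finset (Fin q)) ⊆ {m, m'} := by
      intro l _
      rcases eq_or_ne l m with rfl | hlm
      · simp
      · simp [hc l hlm]
    have h1 := Finset.card_le_card hsub
    have h2 : ({m, m'} : Finset (Fin q)).card ≤ 2 :=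
      (Finset.card_insert_le m {m'}).trans (by simp)
    rw [Finset.card_univ, Fintype.card_fin] at h1
    omega
  -- all b (succ) are equal
  have hbeq : ∀ m m' : Fin q, b m.succ = b m'.succ := by
    intro m m'
    rcases eq_or_ne m m' with rfl | hmm
    · rfl
    obtain ⟨l, hl1, hl2⟩ := hex m m'
    have e1 := hoff m l (Ne.symm hl1)
    have e2 := hoff m' l (Ne.symm hl2)
    linear_combination e2 - e1
  -- all b (succ) equal 1
  have hb1 : ∀ m : Fin q, b m.succ = 1 := by
    intro m
    obtain ⟨l, hl, -⟩ := hex m m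
    have e := hoff m l (Ne.symm hl)
    have heq := hbeq m l
    have hk := key m m
    rw [if_pos rfl, if_pos rfl] at hk
    linear_combination hk - (h m * (starRingEnd ℂ) (h m)) * e
      + (h m * (starRingEnd ℂ) (h m)) * heq
  -- value of S
  have hSval : S = ((∑ j, Complex.normSq (h j) : ℝ) : ℂ) := by
    rw [hS]
    push_cast
    refine Finset.sum_congr rfl fun x _ => ?_
    rw [hb1 x, one_mul, mul_comm, Complex.mul_conj]
  constructor
  · -- b 0
    have h0lt : (0 : ℕ) < q := by omega
    have h1lt : (1 : ℕ) < q := by omega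
    have e := hoff ⟨0, h0lt⟩ ⟨1, h1lt⟩ (by simp [Fin.ext_iff])
    rw [hb1, hb1, hSval] at e
    push_cast
    push_cast at e
    linear_combination e
  · intro j hj
    have hj0 : j ≠ 0 := by
      intro h0; exact hj (by rw [h0]; rfl)
    rw [← Fin.succ_pred j hj0]
    exact hb1 _
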